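/- arXiv:math-ph/0211075 — 2 statements merged into one kernel-verified Lean document; each statement's English description precedes it below -/
import Mathlib

section
/- Let α ∈ ℕ^n be a multiindex with total degree |α|, and suppose nonnegative reals aβ (indexed by multiindices β ≤ α) satisfy aβ ≤ C·L^{|β|}·(|β|+1)^{|β|} for constants C, L > 0. Then ∑_{β ≤ α} C(α,β)·a_β·a_{α−β} ≤ C²·(2L)^{|α|}·(|α|+1)^{|α|}. -/
/-- If nonnegative reals `a β` indexed by multiindices `β ≤ α` satisfy
`a β ≤ C L^{|β|} (|β|+1)^{|β|}`, then
`∑_{β ≤ α} C(α,β) a_β a_{α−β} ≤ C² (2L)^{|α|} (|α|+1)^{|α|}`. -/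
theorem multiindex_leibniz_bound (n : ℕ) (α : Fin n → ℕ) (C L : ℝ)
    (hC : 0 < C) (hL : 0 < L) (a : (Fin n → ℕ) → ℝ)
    (ha0 : ∀ β, β ≤ α → 0 ≤ a β)
    (ha : ∀ β, β ≤ α → a β ≤ C * L ^ (∑ j, β j) * ((∑ j, β j) + 1 : ℝ) ^ (∑ j, β j)) :
    ∑ β ∈ Finset.Icc 0 α,
        (∏ j, ((α j).choose (β j) : ℝ)) * a β * a (α - β)
      ≤ C ^ 2 * (2 * L) ^ (∑ j, α j) * ((∑ j, α j) + 1 : ℝ) ^ (∑ j, α j) := by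
  set N := ∑ j, α j with hN
  -- sum of binomial products
  have hchoose : ∑ β ∈ Finset.Icc 0 α, (∏ j, ((α j).choose (β j) : ℝ)) = 2 ^ N := by
    have hpi := Finset.prod_univ_sum (fun j : Fin n => Finset.Icc (0:ℕ) (α j))
      (fun j k => ((α j).choose k : ℝ))
    rw [Pi.Icc_eq]
    have h0 : (fun i : Fin n => Finset.Icc ((0 : Fin n → ℕ) i) (α i))
        = fun j : Fin n => Finset.Icc (0:ℕ) (α j) := rfl
    rw [h0, ← hpi]
    have hone : ∀ j : Fin n, ∑ k ∈ Finset.Icc (0 : ℕ) (α j), ((α j).choose k : ℝ)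
        = 2 ^ (α j) := by
      intro j
      have := Nat.sum_range_choose (α j)
      have h2 : ∑ k ∈ Finset.Icc (0 : ℕ) (α j), ((α j).choose k : ℕ) = 2 ^ (α j) := by
        rwa [← Nat.Ico_zero_eq_range, Finset.Ico_add_one_right_eq_Icc] at this
      exact_mod_cast congrArg (Nat.cast : ℕ → ℝ) h2
    rw [Finset.prod_congr rfl fun j _ => hone j, Finset.prod_pow_eq_pow_sum]
  -- term bound
  have key : ∀ β ∈ Finset.Icc 0 α,
      (∏ j, ((α j).choose (β j) : ℝ)) * a β * a (α - β)
      ≤ (∏ j, ((α j).choose (β j) : ℝ)) * (C ^ 2 * L ^ N * ((N : ℝ) + 1) ^ N) := by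
    intro β hβ
    rw [Finset.mem_Icc] at hβ
    have hβα : β ≤ α := hβ.2
    have hsub : α - β ≤ α := fun j => Nat.sub_le _ _
    have hsum : (∑ j, β j) + (∑ j, (α - β) j) = N := by
      rw [← Finset.sum_add_distrib]
      exact Finset.sum_congr rfl fun j _ => by
        simpa [Pi.sub_apply] using Nat.add_sub_cancel' (hβα j)
    set b := ∑ j, β j with hb
    set c := ∑ j, (α - β) j with hc
    have hbN : b ≤ N := le_of_add_le_left hsum.le
    have hcN : c ≤ N := le_of_add_le_right hsum.le
    have hprod : 0 ≤ ∏ j, ((α j).choose (β j) : ℝ) :=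
      Finset.prod_nonneg fun j _ => by positivity
    have h1 : a β * a (α - β) ≤
        (C * L ^ b * ((b : ℝ) + 1) ^ b) * (C * L ^ c * ((c : ℝ) + 1) ^ c) :=
      mul_le_mul (ha β hβα) (ha _ hsub) (ha0 _ hsub) (by positivity)
    have hb1 : (b : ℝ) + 1 ≤ (N : ℝ) + 1 := by exact_mod_cast Nat.succ_le_succ hbN
    have hc1 : (c : ℝ) + 1 ≤ (N : ℝ) + 1 := by exact_mod_cast Nat.succ_le_succ hcN
    have h2 : ((b : ℝ) + 1) ^ b * ((c : ℝ) + 1) ^ c ≤ ((N : ℝ) + 1) ^ N := by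
      calc ((b : ℝ) + 1) ^ b * ((c : ℝ) + 1) ^ c
          ≤ ((N : ℝ) + 1) ^ b * ((N : ℝ) + 1) ^ c :=
            mul_le_mul (pow_le_pow_left₀ (by positivity) hb1 b)
              (pow_le_pow_left₀ (by positivity) hc1 c) (by positivity) (by positivity)
        _ = ((N : ℝ) + 1) ^ N := by rw [← pow_add, hsum]
    have h3 : a β * a (α - β) ≤ C ^ 2 * L ^ N * ((N : ℝ) + 1) ^ N := by
      calc a β * a (α - β)
          ≤ (C * L ^ b * ((b : ℝ) + 1) ^ b) * (C * L ^ c * ((c : ℝ) + 1) ^ c) := h1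
        _ = C ^ 2 * L ^ (b + c) * (((b : ℝ) + 1) ^ b * ((c : ℝ) + 1) ^ c) := by
            rw [pow_add]; ring
        _ = C ^ 2 * L ^ N * (((b : ℝ) + 1) ^ b * ((c : ℝ) + 1) ^ c) := by rw [hsum]
        _ ≤ C ^ 2 * L ^ N * ((N : ℝ) + 1) ^ N :=
            mul_le_mul_of_nonneg_left h2 (by positivity)
    calc (∏ j, ((α j).choose (β j) : ℝ)) * a β * a (α - β)
        = (∏ j, ((α j).choose (β j) : ℝ)) * (a β * a (α - β)) := by ring
      _ ≤ (∏ j, ((α j).choose (β j) : ℝ)) * (C ^ 2 * L ^ N * ((N : ℝ) + 1) ^ N) :=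
          mul_le_mul_of_nonneg_left h3 hprod
  calc ∑ β ∈ Finset.Icc 0 α, (∏ j, ((α j).choose (β j) : ℝ)) * a β * a (α - β)
      ≤ ∑ β ∈ Finset.Icc 0 α,
          (∏ j, ((α j).choose (β j) : ℝ)) * (C ^ 2 * L ^ N * ((N : ℝ) + 1) ^ N) :=
        Finset.sum_le_sum key
    _ = (2 : ℝ) ^ N * (C ^ 2 * L ^ N * ((N : ℝ) + 1) ^ N) := by
        rw [← Finset.sum_mul, hchoose]
    _ = C ^ 2 * (2 * L) ^ N * ((N : ℝ) + 1) ^ N := by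
        rw [mul_pow]; ring
end

section
/- For every ε > 0 there exists L > 0 such that for every multiindex α ∈ ℕ³ with |α| ≥ 1, the α-th partial derivative of the function f(x) = 1/|x| on ℝ³ satisfies the bound sup_{|x| > ε} |∂^α f(x)| ≤ L^{|α|+1} · |α|!. -/
/-- Partial derivative in the `i`-th coordinate direction of `ℝ³`. -/
noncomputable def pderiv3 (i : Fin 3) (f : EuclideanSpace ℝ (Fin 3) → ℝ) :
    EuclideanSpace ℝ (Fin 3) → ℝ :=
  fun x => fderiv ℝ f x (EuclideanSpace.single i 1)

/-- Iterated partial derivative `∂^α` for a multiindex `α ∈ ℕ³`. -/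
noncomputable def pderivMulti (α : Fin 3 → ℕ) (f : EuclideanSpace ℝ (Fin 3) → ℝ) :
    EuclideanSpace ℝ (Fin 3) → ℝ :=
  ((pderiv3 0)^[α 0] ∘ (pderiv3 1)^[α 1] ∘ (pderiv3 2)^[α 2]) f

/-! Off the origin, every partial derivative of order `n` of `‖x‖⁻¹` is a finite sum of terms
`c x^β ‖x‖^{-(n+1+|β|)}` with `|β| ≤ n`. Each term is homogeneous of degree `-(n+1)`, so it is
bounded by `|c| ‖x‖^{-(n+1)}`. Differentiating a term in `x_i` gives two terms of the same shape,
with coefficients `β_i c` and `-(n+1+|β|) c`; hence one more derivative multiplies the total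
coefficient mass by at most `3(n+1)`, and the mass after `n` derivatives is at most `3^n n!`. -/

open Finset Function Filter Topology

theorem prod_pow_update {ι M : Type*} [Fintype ι] [DecidableEq ι] [CommMonoid M] (x : ι → M)
    (β : ι → ℕ) (i : ι) (v : ℕ) :
    ∏ j, x j ^ update β i v j = x i ^ v * ∏ j ∈ univ.erase i, x j ^ β j := by
  rw [← mul_prod_erase _ _ (mem_univ i), update_self]
  congr 1
  exact prod_congr rfl fun j hj => by rw [update_of_ne (ne_of_mem_erase hj)]

theorem sum_update_add {ι : Type*} [Fintype ι] [DecidableEq ι] (β : ι → ℕ) (i : ι) (v : ℕ) :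
    ∑ j, update β i v j + β i = v + ∑ j, β j := by
  rw [sum_update_of_mem (mem_univ i), sum_eq_add_sum_sdiff_singleton_of_mem (mem_univ i)]
  ring

theorem hasFDerivAt_norm_inv {E : Type*} [NormedAddCommGroup E] [InnerProductSpace ℝ E] {x : E}
    (hx : x ≠ 0) :
    HasFDerivAt (fun y : E => ‖y‖⁻¹) (-(‖x‖⁻¹ ^ 3) • innerSL ℝ x) x := by
  have hx' : ‖x‖ ≠ 0 := norm_ne_zero_iff.2 hx
  have hnorm : HasFDerivAt (fun y : E => ‖y‖) (‖x‖⁻¹ • innerSL ℝ x) x := by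
    have := (hasStrictFDerivAt_norm_sq x).hasFDerivAt.sqrt (pow_ne_zero 2 hx')
    simp only [Real.sqrt_sq (norm_nonneg _)] at this
    refine this.congr_fderiv ?_
    ext v
    simp only [one_div, mul_inv_rev, smul_apply, coe_innerSL_apply, nsmul_eq_mul, Nat.cast_ofNat,
      smul_eq_mul]
    field_simp
  refine ((hasDerivAt_inv hx').comp_hasFDerivAt x hnorm).congr_fderiv ?_
  ext v
  simp only [neg_smul, neg_apply, smul_apply, coe_innerSL_apply, smul_eq_mul, inv_pow, neg_inj]
  field_simp

section CoulombExpansion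

variable {ι : Type*} [Fintype ι]

noncomputable def coulombTerm (n : ℕ) (c : ℝ) (β : ι → ℕ) (x : EuclideanSpace ℝ ι) : ℝ :=
  c * (∏ j, x j ^ β j) * ‖x‖⁻¹ ^ (n + 1 + ∑ j, β j)

theorem abs_coulombTerm_le (n : ℕ) (c : ℝ) (β : ι → ℕ) {x : EuclideanSpace ℝ ι} (hx : x ≠ 0) :
    |coulombTerm n c β x| ≤ |c| * ‖x‖⁻¹ ^ (n + 1) := by
  have hmonomial : |∏ j, x j ^ β j| ≤ ‖x‖ ^ ∑ j, β j := by
    rw [abs_prod, ← prod_pow_eq_pow_sum]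
    gcongr with j
    rw [abs_pow]
    gcongr
    exact PiLp.norm_apply_le x j
  have hhomogeneous : ‖x‖ ^ (∑ j, β j) * ‖x‖⁻¹ ^ (n + 1 + ∑ j, β j) = ‖x‖⁻¹ ^ (n + 1) := by
    rw [pow_add, mul_comm, mul_assoc, ← mul_pow, inv_mul_cancel₀ (norm_ne_zero_iff.2 hx),
      one_pow, mul_one]
  calc |coulombTerm n c β x| = |c| * (|∏ j, x j ^ β j| * ‖x‖⁻¹ ^ (n + 1 + ∑ j, β j)) := by
        rw [coulombTerm, abs_mul, abs_mul, abs_of_nonneg (by positivity : (0 : ℝ) ≤ ‖x‖⁻¹ ^ _),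
          mul_assoc]
    _ ≤ |c| * (‖x‖ ^ (∑ j, β j) * ‖x‖⁻¹ ^ (n + 1 + ∑ j, β j)) := by gcongr
    _ = |c| * ‖x‖⁻¹ ^ (n + 1) := by rw [hhomogeneous]

def HasCoulombExpansion (n : ℕ) (g : EuclideanSpace ℝ ι → ℝ) : Prop :=
  ∃ (κ : Type) (_ : Fintype κ) (c : κ → ℝ) (β : κ → ι → ℕ),
    (∀ k, ∑ j, β k j ≤ n) ∧ ∑ k, |c k| ≤ 3 ^ n * n.factorial ∧
      ∀ x ≠ 0, g x = ∑ k, coulombTerm n (c k) (β k) x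

theorem hasCoulombExpansion_norm_inv : HasCoulombExpansion 0 fun x : EuclideanSpace ℝ ι => ‖x‖⁻¹ :=
  ⟨Unit, inferInstance, fun _ => 1, fun _ => 0, by simp, by simp, fun x _ => by simp [coulombTerm]⟩

theorem HasCoulombExpansion.abs_le {n : ℕ} {g : EuclideanSpace ℝ ι → ℝ}
    (h : HasCoulombExpansion n g) {x : EuclideanSpace ℝ ι} (hx : x ≠ 0) :
    |g x| ≤ 3 ^ n * n.factorial * ‖x‖⁻¹ ^ (n + 1) := by
  obtain ⟨κ, _, c, β, -, hmass, hg⟩ := h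
  calc |g x| ≤ ∑ k, |coulombTerm n (c k) (β k) x| := hg x hx ▸ abs_sum_le_sum_abs _ _
    _ ≤ ∑ k, |c k| * ‖x‖⁻¹ ^ (n + 1) := sum_le_sum fun k _ => abs_coulombTerm_le n _ _ hx
    _ ≤ 3 ^ n * n.factorial * ‖x‖⁻¹ ^ (n + 1) := by rw [← sum_mul]; gcongr

variable [DecidableEq ι]

theorem hasFDerivAt_monomial (β : ι → ℕ) (x : EuclideanSpace ℝ ι) :
    HasFDerivAt (fun y : EuclideanSpace ℝ ι => ∏ j, y j ^ β j)
      (∑ j, (β j * ∏ k, x k ^ update β j (β j - 1) k) • EuclideanSpace.proj (𝕜 := ℝ) j) x := by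
  have := HasFDerivAt.finsetProd (u := univ) fun j _ =>
    (hasDerivAt_pow (β j) (x j)).comp_hasFDerivAt x (EuclideanSpace.proj (𝕜 := ℝ) j).hasFDerivAt
  refine this.congr_fderiv (sum_congr rfl fun j _ => ?_)
  rw [smul_smul, prod_pow_update]
  exact congrArg (· • _) ((mul_comm _ _).trans (mul_assoc _ _ _))

theorem differentiableAt_coulombTerm (n : ℕ) (c : ℝ) (β : ι → ℕ) {x : EuclideanSpace ℝ ι}
    (hx : x ≠ 0) : DifferentiableAt ℝ (coulombTerm n c β) x :=
  (((hasFDerivAt_monomial β x).const_mul c).fun_mul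
    ((hasFDerivAt_norm_inv hx).pow (n + 1 + ∑ j, β j))).differentiableAt

theorem fderiv_coulombTerm_single (n : ℕ) (c : ℝ) (β : ι → ℕ) {x : EuclideanSpace ℝ ι}
    (hx : x ≠ 0) (i : ι) :
    fderiv ℝ (coulombTerm n c β) x (EuclideanSpace.single i 1) =
      coulombTerm (n + 1) (β i * c) (update β i (β i - 1)) x +
        coulombTerm (n + 1) (-((n + 1 + ∑ j, β j : ℕ) : ℝ) * c) (update β i (β i + 1)) x := by
  have h := ((hasFDerivAt_monomial β x).const_mul c).fun_mul
    ((hasFDerivAt_norm_inv hx).pow (n + 1 + ∑ j, β j))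
  have hraise_sum : ∑ j, update β i (β i + 1) j = ∑ j, β j + 1 := by
    have := sum_update_add β i (β i + 1); omega
  have hraise_prod : ∏ j, x j ^ update β i (β i + 1) j = x i * ∏ j, x j ^ β j := by
    rw [prod_pow_update, ← mul_prod_erase univ (fun j => x j ^ β j) (mem_univ i), pow_succ]; ring
  rw [HasFDerivAt.fderiv (f := coulombTerm n c β) h]
  simp only [Nat.succ_add_sub_one, nsmul_eq_mul, Nat.cast_add, Nat.cast_one, Nat.cast_sum,
    neg_smul, smul_neg, add_apply, neg_apply, smul_apply, coe_innerSL_apply,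
    EuclideanSpace.inner_single_right, Real.ringHom_apply, one_mul, smul_eq_mul, _root_.sum_apply,
    PiLp.proj_apply, PiLp.single_apply, mul_ite, mul_one, mul_zero, sum_ite_eq', mem_univ,
    ↓reduceIte, coulombTerm, neg_add_rev, hraise_prod, hraise_sum]
  -- `β i - 1` truncates to `0` when `β i = 0`, but then the lowered term has coefficient `0`.
  rcases Nat.eq_zero_or_pos (β i) with h0 | hpos
  · simp only [h0, CharP.cast_eq_zero, zero_mul, mul_zero, add_zero, zero_add]
    ring
  · have hlower_sum : ∑ j, update β i (β i - 1) j + 1 = ∑ j, β j := by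
      have := sum_update_add β i (β i - 1); omega
    rw [show n + 1 + 1 + ∑ j, update β i (β i - 1) j = n + 1 + ∑ j, β j by omega]
    ring

theorem HasCoulombExpansion.fderiv_single {n : ℕ} {g : EuclideanSpace ℝ ι → ℝ}
    (h : HasCoulombExpansion n g) (i : ι) :
    HasCoulombExpansion (n + 1) fun x => fderiv ℝ g x (EuclideanSpace.single i 1) := by
  obtain ⟨κ, _, c, β, hdeg, hmass, hg⟩ := h
  refine ⟨κ ⊕ κ, inferInstance,
    Sum.elim (fun k => β k i * c k) (fun k => -((n + 1 + ∑ j, β k j : ℕ) : ℝ) * c k),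
    Sum.elim (fun k => update (β k) i (β k i - 1)) (fun k => update (β k) i (β k i + 1)),
    ?_, ?_, ?_⟩
  · rintro (k | k)
    · have := sum_update_add (β k) i (β k i - 1); have := hdeg k
      simp only [Sum.elim_inl]; omega
    · have := sum_update_add (β k) i (β k i + 1); have := hdeg k
      simp only [Sum.elim_inr]; omega
  · have hgrowth : ∀ k, β k i + (n + 1 + ∑ j, β k j) ≤ 3 * (n + 1) := fun k => by
      have := hdeg k
      have := single_le_sum (f := β k) (fun j _ => Nat.zero_le _) (mem_univ i)
      omega
    calc ∑ k, |Sum.elim (fun k => β k i * c k) (fun k => -((n + 1 + ∑ j, β k j : ℕ) : ℝ) * c k) k|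
        = ∑ k, ((β k i + (n + 1 + ∑ j, β k j) : ℕ) : ℝ) * |c k| := by
          rw [Fintype.sum_sum_type, ← sum_add_distrib]
          refine sum_congr rfl fun k _ => ?_
          simp only [Sum.elim_inl, Sum.elim_inr, abs_mul, abs_neg, Nat.abs_cast]
          push_cast
          ring
      _ ≤ ∑ k, (3 * (n + 1) : ℝ) * |c k| :=
          sum_le_sum fun k _ => by gcongr; exact_mod_cast hgrowth k
      _ ≤ 3 * (n + 1) * (3 ^ n * n.factorial) := by rw [← mul_sum]; gcongr
      _ = 3 ^ (n + 1) * (n + 1).factorial := by push_cast [Nat.factorial_succ]; ring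
  · intro x hx
    have hev : g =ᶠ[𝓝 x] fun y => ∑ k, coulombTerm n (c k) (β k) y :=
      (eventually_ne_nhds hx).mono hg
    show fderiv ℝ g x (EuclideanSpace.single i 1) = _
    rw [hev.fderiv_eq, fderiv_fun_sum fun k _ => differentiableAt_coulombTerm n _ _ hx,
      _root_.sum_apply, Fintype.sum_sum_type, ← sum_add_distrib]
    exact sum_congr rfl fun k _ => fderiv_coulombTerm_single n _ _ hx i

end CoulombExpansion

theorem HasCoulombExpansion.iterate_pderiv3 {n : ℕ} {g : EuclideanSpace ℝ (Fin 3) → ℝ}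
    (h : HasCoulombExpansion n g) (i : Fin 3) (k : ℕ) :
    HasCoulombExpansion (n + k) ((pderiv3 i)^[k] g) := by
  induction k with
  | zero => exact h
  | succ k ih => rw [iterate_succ_apply']; exact ih.fderiv_single i

theorem hasCoulombExpansion_pderivMulti (α : Fin 3 → ℕ) :
    HasCoulombExpansion (∑ i, α i) (pderivMulti α fun y => ‖y‖⁻¹) := by
  have h := ((hasCoulombExpansion_norm_inv.iterate_pderiv3 2 (α 2)).iterate_pderiv3 1
    (α 1)).iterate_pderiv3 0 (α 0)
  rwa [Fin.sum_univ_three, show α 0 + α 1 + α 2 = 0 + α 2 + α 1 + α 0 by omega]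

/-- For every `ε > 0` there is `L > 0` such that for every multiindex `α` with
`|α| ≥ 1`, `sup_{|x|>ε} |∂^α |x|⁻¹| ≤ L^{|α|+1} |α|!`. -/
theorem coulomb_derivative_bound (ε : ℝ) (hε : 0 < ε) :
    ∃ L > 0, ∀ α : Fin 3 → ℕ, 1 ≤ ∑ i, α i →
      ∀ x : EuclideanSpace ℝ (Fin 3), ε < ‖x‖ →
        |pderivMulti α (fun y => ‖y‖⁻¹) x|
          ≤ L ^ ((∑ i, α i) + 1) * Nat.factorial (∑ i, α i) := by
  refine ⟨3 / ε, by positivity, fun α _ x hx => ?_⟩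
  have hx0 : x ≠ 0 := by rintro rfl; rw [norm_zero] at hx; linarith
  set N := ∑ i, α i
  calc |pderivMulti α (fun y => ‖y‖⁻¹) x| ≤ 3 ^ N * N.factorial * ‖x‖⁻¹ ^ (N + 1) :=
        (hasCoulombExpansion_pderivMulti α).abs_le hx0
    _ ≤ 3 ^ (N + 1) * N.factorial * ε⁻¹ ^ (N + 1) := by
        gcongr
        · norm_num
        · omega
    _ = (3 / ε) ^ (N + 1) * N.factorial := by ring
end
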